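/- arXiv:1905.13167 — 3 statements merged into one kernel-verified Lean document; each statement's English description precedes it below -/
import Mathlib

section
/- Let k, N ∈ ℕ with N ≥ 1, let μ̂_1, …, μ̂_N ∈ ℝ^k, let w ∈ ℝ^k, and let c₁ ≥ 0. Define V̂_n = ⟨w, μ̂_n⟩, define σ ∈ ℝ^k by σ[i] = sqrt(c₁ · Σ_{n,n'=1}^{N} (μ̂_n[i] − μ̂_{n'}[i])²), define μ̄ = (1/N)·Σ_{n=1}^{N} μ̂_n, and define μ̂_lb(w) ∈ ℝ^k componentwise by μ̂_lb(w)[i] = μ̄[i] − (1/N)·σ[i] if w[i] ≥ 0 and μ̂_lb(w)[i] = μ̄[i] + (1/N)·σ[i] if w[i] < 0. Then (1/N)·Σ_{n=1}^{N} V̂_n − (1/N)·sqrt(c₁ · Σ_{n,n'=1}^{N} (V̂_n − V̂_{n'})²) ≥ ⟨w, μ̂_lb(w)⟩. -/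
/-!
Writing `μlb i = μbar i ∓ σ i / N` with the sign of `w i` gives
`∑ i, w i * μlb i = (1/N) ∑ n, V n - (1/N) ∑ i, |w i| * σ i`, so the claim reduces to
`√(c₁ ∑ (V n - V n')²) ≤ ∑ i, |w i| * σ i`. Since `V n - V n' = ∑ i, w i * (μhat n i - μhat n' i)`,
this is the triangle inequality for the Euclidean norm on `ℝ^(N × N)`, applied to the vectors
`w i • (μhat n i - μhat n' i)_{n,n'}`.
-/

open Finset

lemma sqrt_sum_sq_sum_mul_le {ι κ : Type*} [Fintype ι] [Fintype κ] (w : ι → ℝ) (d : ι → κ → ℝ) :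
    √(∑ j, (∑ i, w i * d i j) ^ 2) ≤ ∑ i, |w i| * √(∑ j, d i j ^ 2) := by
  have h := norm_sum_le (E := EuclideanSpace ℝ κ) univ fun i => w i • WithLp.toLp 2 (d i)
  simpa only [EuclideanSpace.norm_eq, norm_smul, Real.norm_eq_abs, sq_abs, WithLp.ofLp_sum,
    WithLp.ofLp_smul, Finset.sum_apply, Pi.smul_apply, smul_eq_mul] using h

lemma sqrt_mul_sum_sq_sub_sum_mul_le {ι κ : Type*} [Fintype ι] [Fintype κ] (c : ℝ) (w : ι → ℝ)
    (μ : κ → ι → ℝ) :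
    √(c * ∑ n, ∑ n', (∑ i, w i * μ n i - ∑ i, w i * μ n' i) ^ 2) ≤
      ∑ i, |w i| * √(c * ∑ n, ∑ n', (μ n i - μ n' i) ^ 2) := by
  simp only [← Fintype.sum_prod_type' fun n n' => (_ : ℝ), ← sum_sub_distrib, ← mul_sub,
    Real.sqrt_mul' c (sum_nonneg fun _ _ => sq_nonneg _), mul_left_comm _ √c, ← mul_sum]
  exact mul_le_mul_of_nonneg_left (sqrt_sum_sq_sum_mul_le w _) (Real.sqrt_nonneg c)

lemma mul_ite_sub_add {α : Type*} [Ring α] [LinearOrder α] [IsStrictOrderedRing α] (w a s : α) :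
    w * (if 0 ≤ w then a - s else a + s) = w * a - |w| * s := by
  split_ifs with hw
  · rw [abs_of_nonneg hw, mul_sub]
  · rw [abs_of_neg (not_le.mp hw), mul_add, neg_mul, sub_neg_eq_add]

theorem value_lower_bound_factorization_general
    (k N : ℕ) (μhat : Fin N → Fin k → ℝ) (w : Fin k → ℝ)
    (c₁ : ℝ)
    (V : Fin N → ℝ) (hV : ∀ n, V n = ∑ i, w i * μhat n i)
    (σ : Fin k → ℝ)
    (hσ : ∀ i, σ i = Real.sqrt (c₁ * ∑ n, ∑ n', (μhat n i - μhat n' i) ^ 2))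
    (μbar : Fin k → ℝ) (hμbar : ∀ i, μbar i = (1 / (N : ℝ)) * ∑ n, μhat n i)
    (μlb : Fin k → ℝ)
    (hμlb : ∀ i, μlb i =
      if 0 ≤ w i then μbar i - (1 / (N : ℝ)) * σ i
      else μbar i + (1 / (N : ℝ)) * σ i) :
    (1 / (N : ℝ)) * ∑ n, V n -
        (1 / (N : ℝ)) * Real.sqrt (c₁ * ∑ n, ∑ n', (V n - V n') ^ 2) ≥
      ∑ i, w i * μlb i := by
  have hmean : ∑ i, w i * μbar i = (1 / (N : ℝ)) * ∑ n, V n := by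
    simp only [hμbar, hV, mul_sum, mul_left_comm (w _)]
    exact sum_comm
  have hlb : ∑ i, w i * μlb i =
      (1 / (N : ℝ)) * ∑ n, V n - (1 / (N : ℝ)) * ∑ i, |w i| * σ i := by
    simp only [hμlb, mul_ite_sub_add, sum_sub_distrib, hmean, mul_sum, mul_left_comm |w _|]
  have hspread : Real.sqrt (c₁ * ∑ n, ∑ n', (V n - V n') ^ 2) ≤ ∑ i, |w i| * σ i := by
    simpa only [hV, hσ] using sqrt_mul_sum_sq_sub_sum_mul_le c₁ w μhat
  rw [hlb, ge_iff_le, sub_le_sub_iff_left]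
  exact mul_le_mul_of_nonneg_left hspread (by positivity)

/-- Factorization inequality behind the empirical-Bernstein value lower bound:
the data-dependent part of `V_lb` computed from the per-trajectory value
estimates `V̂_n = ⟨w, μ̂_n⟩` dominates `⟨w, μ̂_lb(w)⟩`, where `μ̂_lb(w)` is the
sign-dependent combination of per-coordinate confidence bounds. -/
theorem value_lower_bound_factorization
    (k N : ℕ) (hN : 1 ≤ N) (μhat : Fin N → Fin k → ℝ) (w : Fin k → ℝ)
    (c₁ : ℝ) (hc₁ : 0 ≤ c₁)
    (V : Fin N → ℝ) (hV : ∀ n, V n = ∑ i, w i * μhat n i)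
    (σ : Fin k → ℝ)
    (hσ : ∀ i, σ i = Real.sqrt (c₁ * ∑ n, ∑ n', (μhat n i - μhat n' i) ^ 2))
    (μbar : Fin k → ℝ) (hμbar : ∀ i, μbar i = (1 / (N : ℝ)) * ∑ n, μhat n i)
    (μlb : Fin k → ℝ)
    (hμlb : ∀ i, μlb i =
      if 0 ≤ w i then μbar i - (1 / (N : ℝ)) * σ i
      else μbar i + (1 / (N : ℝ)) * σ i) :
    (1 / (N : ℝ)) * ∑ n, V n -
        (1 / (N : ℝ)) * Real.sqrt (c₁ * ∑ n, ∑ n', (V n - V n') ^ 2) ≥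
      ∑ i, w i * μlb i :=
  value_lower_bound_factorization_general k N μhat w c₁ V hV σ hσ μbar hμbar μlb hμlb
end

section
/- Let k ∈ ℕ, μ_b ∈ ℝ^k, F ⊆ ℝ^k, ε ≥ 0 with ε ≠ 1, and define P_C = {v ∈ ℝ^k : for all μ ∈ F, (1/|1+ε|)·⟨v, μ_b⟩ ≤ ⟨v, μ⟩ ≤ (1/|1−ε|)·⟨v, μ_b⟩}. Suppose μ* ∈ F and w ∈ ℝ^k satisfy ⟨w, μ*⟩ < (1/|1+ε|)·⟨w, μ_b⟩. Then (i) w ∉ P_C, (ii) ⟨w, |1+ε|·μ* − μ_b⟩ < 0, and (iii) every v ∈ P_C satisfies ⟨v, |1+ε|·μ* − μ_b⟩ ≥ 0; that is, the hyperplane {v : ⟨v, |1+ε|·μ* − μ_b⟩ = 0} separates w from P_C. -/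
/-! Since `|1 + ε| > 0`, the lower consistency constraint of `P_C` at `μ*` is, after multiplying
by `|1 + ε|`, exactly the half-space `⟨v, |1 + ε| μ* - μ_b⟩ ≥ 0`, and the hypothesis on `w` says
that `w` violates it. -/

theorem sum_mul_const_mul_sub {ι R : Type*} [Fintype ι] [CommRing R] (c : R) (v μ ν : ι → R) :
    ∑ i, v i * (c * μ i - ν i) = c * ∑ i, v i * μ i - ∑ i, v i * ν i := by
  simp only [mul_sub, Finset.sum_sub_distrib, Finset.mul_sum, mul_left_comm]

theorem one_div_mul_sum_le_sum_iff {ι R : Type*} [Fintype ι] [Field R] [LinearOrder R]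
    [IsStrictOrderedRing R] {c : R} (hc : 0 < c) (v μ ν : ι → R) :
    1 / c * ∑ i, v i * ν i ≤ ∑ i, v i * μ i ↔ 0 ≤ ∑ i, v i * (c * μ i - ν i) := by
  rw [sum_mul_const_mul_sub, sub_nonneg, one_div_mul_eq_div, div_le_iff₀' hc]

theorem separation_oracle_lower_consistency_case_general
    (k : ℕ) (μb : Fin k → ℝ) (F : Set (Fin k → ℝ)) (ε : ℝ)
    (hε : 0 ≤ ε)
    (μstar : Fin k → ℝ) (hμstar : μstar ∈ F) (w : Fin k → ℝ)
    (hw : ∑ i, w i * μstar i < (1 / |1 + ε|) * ∑ i, w i * μb i) :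
    w ∉ {v : Fin k → ℝ | ∀ μ ∈ F,
        (1 / |1 + ε|) * (∑ i, v i * μb i) ≤ ∑ i, v i * μ i ∧
        ∑ i, v i * μ i ≤ (1 / |1 - ε|) * (∑ i, v i * μb i)} ∧
    ∑ i, w i * (|1 + ε| * μstar i - μb i) < 0 ∧
    ∀ v ∈ {v : Fin k → ℝ | ∀ μ ∈ F,
        (1 / |1 + ε|) * (∑ i, v i * μb i) ≤ ∑ i, v i * μ i ∧
        ∑ i, v i * μ i ≤ (1 / |1 - ε|) * (∑ i, v i * μb i)},
      0 ≤ ∑ i, v i * (|1 + ε| * μstar i - μb i) := by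
  have hc : 0 < |1 + ε| := abs_pos_of_pos (by linarith)
  have halfspace (v : Fin k → ℝ) := one_div_mul_sum_le_sum_iff hc v μstar μb
  refine ⟨fun hwP => (hwP μstar hμstar).1.not_gt hw, ?_,
    fun v hv => (halfspace v).mp (hv μstar hμstar).1⟩
  exact not_le.mp fun h => hw.not_ge ((halfspace w).mpr h)

/-- Correctness of the first rejection case of the separation oracle:
if `⟨w, μ*⟩ < (1/|1+ε|)⟨w, μ_b⟩` for some `μ* ∈ F`, then `w ∉ P_C`,
`⟨w, |1+ε|μ* − μ_b⟩ < 0`, and every `v ∈ P_C` satisfies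
`⟨v, |1+ε|μ* − μ_b⟩ ≥ 0`. -/
theorem separation_oracle_lower_consistency_case
    (k : ℕ) (μb : Fin k → ℝ) (F : Set (Fin k → ℝ)) (ε : ℝ)
    (hε : 0 ≤ ε) (hε1 : ε ≠ 1)
    (μstar : Fin k → ℝ) (hμstar : μstar ∈ F) (w : Fin k → ℝ)
    (hw : ∑ i, w i * μstar i < (1 / |1 + ε|) * ∑ i, w i * μb i) :
    w ∉ {v : Fin k → ℝ | ∀ μ ∈ F,
        (1 / |1 + ε|) * (∑ i, v i * μb i) ≤ ∑ i, v i * μ i ∧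
        ∑ i, v i * μ i ≤ (1 / |1 - ε|) * (∑ i, v i * μb i)} ∧
    ∑ i, w i * (|1 + ε| * μstar i - μb i) < 0 ∧
    ∀ v ∈ {v : Fin k → ℝ | ∀ μ ∈ F,
        (1 / |1 + ε|) * (∑ i, v i * μb i) ≤ ∑ i, v i * μ i ∧
        ∑ i, v i * μ i ≤ (1 / |1 - ε|) * (∑ i, v i * μb i)},
      0 ≤ ∑ i, v i * (|1 + ε| * μstar i - μb i) :=
  separation_oracle_lower_consistency_case_general k μb F ε hε μstar hμstar w hw
end

section
/- Let S and A be finite nonempty types, T ∈ ℕ, and let P₀ : S → ℝ, P : S → A → S → ℝ, π : S → A → ℝ, π_b : S → A → ℝ be nonnegative functions with Σ_s P₀(s) = 1, Σ_{s'} P(s, a, s') = 1 for all s, a, Σ_a π(s, a) = 1 and Σ_a π_b(s, a) = 1 for all s, and π_b(s, a) > 0 for all s, a. For a trajectory τ = ((s_0, a_0), …, (s_T, a_T)) ∈ (S × A)^{T+1}, define p_π(τ) = P₀(s_0) · Π_{t=0}^{T} π(s_t, a_t) · Π_{t=0}^{T−1} P(s_t, a_t, s_{t+1}), and define p_{π_b}(τ)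 analogously with π_b in place of π. Then for every t ≤ T and every function f : S → ℝ: Σ_τ p_{π_b}(τ) · (Π_{u=0}^{t} π(s_u, a_u)/π_b(s_u, a_u)) · f(s_t) = Σ_τ p_π(τ) · f(s_t). -/
/-!
Multiplying the behaviour-policy weight of a trajectory by `ρ_t` replaces `π_b` by `π` at the
times `u ≤ t`, giving the weight of a trajectory under the time-dependent policy that follows `π`
up to time `t` and `π_b` afterwards. Against a function of the state at time `t`, the policy used
after time `t` is irrelevant: summing out the last step of a trajectory contributes the factor
`∑_{(s,a)} μ(s,a) P(s_T,a_T,s) = 1`, so the tail can be peeled off one step at a time.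
-/

open Finset

section TrajectoryWeight

variable {S A : Type*} (P₀ : S → ℝ) (P : S → A → S → ℝ)

/-- The weight `p_μ(τ)` of the paper, for a policy `μ u` that may depend on the time `u`. -/
def trajWeight {T : ℕ} (μ : Fin (T + 1) → S → A → ℝ) (τ : Fin (T + 1) → S × A) : ℝ :=
  P₀ (τ 0).1 * (∏ u, μ u (τ u).1 (τ u).2) *
    ∏ u : Fin T, P (τ u.castSucc).1 (τ u.castSucc).2 (τ u.succ).1

theorem trajWeight_snoc {T : ℕ} (μ : Fin (T + 2) → S → A → ℝ) (σ : Fin (T + 1) → S × A)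
    (x : S × A) :
    trajWeight P₀ P μ (Fin.snoc σ x) =
      trajWeight P₀ P (fun u ↦ μ u.castSucc) σ *
        (μ (Fin.last _) x.1 x.2 * P (σ (Fin.last T)).1 (σ (Fin.last T)).2 x.1) := by
  have h₀ : (0 : Fin (T + 2)) = (0 : Fin (T + 1)).castSucc := rfl
  rw [trajWeight, trajWeight, Fin.prod_univ_castSucc (n := T), Fin.prod_univ_castSucc (n := T + 1)]
  simp only [h₀, Fin.succ_castSucc, Fin.snoc_castSucc, Fin.succ_last, Fin.snoc_last]
  ring

variable [Fintype S] [Fintype A]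

theorem sum_policy_mul_transition_eq_one {ν : S → A → ℝ} (hν : ∀ s, ∑ a, ν s a = 1)
    {p : S → ℝ} (hp : ∑ s, p s = 1) :
    ∑ x : S × A, ν x.1 x.2 * p x.1 = 1 := by
  simp only [Fintype.sum_prod_type, ← Finset.sum_mul, hν, one_mul, hp]

theorem sum_trajWeight_snoc_mul {T : ℕ} (hPsum : ∀ s a, ∑ s', P s a s' = 1)
    (μ : Fin (T + 2) → S → A → ℝ) (hμ : ∀ s, ∑ a, μ (Fin.last _) s a = 1)
    (g : (Fin (T + 1) → S × A) → ℝ) :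
    ∑ τ : Fin (T + 2) → S × A, trajWeight P₀ P μ τ * g (Fin.init τ) =
      ∑ σ : Fin (T + 1) → S × A, trajWeight P₀ P (fun u ↦ μ u.castSucc) σ * g σ := by
  rw [← (Fin.snocEquiv fun _ ↦ S × A).sum_comp, Fintype.sum_prod_type, Finset.sum_comm]
  refine Finset.sum_congr rfl fun σ _ ↦ ?_
  simp only [Fin.snocEquiv, Equiv.coe_fn_mk, Fin.init_snoc, trajWeight_snoc]
  rw [← Finset.sum_mul, ← Finset.mul_sum,
    sum_policy_mul_transition_eq_one hμ (hPsum _ _), mul_one]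

theorem sum_trajWeight_mul_eq_of_eqOn_Iic {T : ℕ} (hPsum : ∀ s a, ∑ s', P s a s' = 1)
    {μ ν : Fin (T + 1) → S → A → ℝ} (hμ : ∀ u s, ∑ a, μ u s a = 1)
    (hν : ∀ u s, ∑ a, ν u s a = 1) (t : Fin (T + 1)) (heq : ∀ u ≤ t, μ u = ν u)
    (g : S × A → ℝ) :
    ∑ τ, trajWeight P₀ P μ τ * g (τ t) = ∑ τ, trajWeight P₀ P ν τ * g (τ t) := by
  induction T with
  | zero => rw [show μ = ν from funext fun u ↦ heq u (by omega)]
  | succ T ih =>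
    induction t using Fin.lastCases with
    | last => rw [show μ = ν from funext fun u ↦ heq u (Fin.le_last u)]
    | cast t =>
      have hinit : ∀ ρ : Fin (T + 2) → S → A → ℝ, (∀ s, ∑ a, ρ (Fin.last _) s a = 1) →
          ∑ τ, trajWeight P₀ P ρ τ * g (τ t.castSucc) =
            ∑ σ, trajWeight P₀ P (fun u ↦ ρ u.castSucc) σ * g (σ t) :=
        fun ρ hρ ↦ sum_trajWeight_snoc_mul P₀ P hPsum ρ hρ fun σ ↦ g (σ t)
      rw [hinit μ (hμ _), hinit ν (hν _)]
      exact ih (fun u ↦ hμ u.castSucc) (fun u ↦ hν u.castSucc) t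
        fun u hu ↦ heq _ (Fin.castSucc_le_castSucc_iff.2 hu)

end TrajectoryWeight

theorem prod_mul_prod_div_eq_prod_ite {ι M : Type*} [Fintype ι] [DecidableEq ι]
    [CommGroupWithZero M] (s : Finset ι) {a b : ι → M} (hb : ∀ u ∈ s, b u ≠ 0) :
    (∏ u, b u) * ∏ u ∈ s, a u / b u = ∏ u, if u ∈ s then a u else b u := by
  have hmul : ∀ u, (if u ∈ s then a u else b u) = b u * if u ∈ s then a u / b u else 1 := by
    intro u
    split_ifs with hu
    · exact (mul_div_cancel₀ _ (hb u hu)).symm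
    · exact (mul_one _).symm
  simp only [hmul, Finset.prod_mul_distrib, Finset.prod_ite_mem, Finset.univ_inter]

theorem pdis_unbiased_general
    (S A : Type) [Fintype S] [Fintype A]
    (T : ℕ)
    (P₀ : S → ℝ) (P : S → A → S → ℝ) (π πb : S → A → ℝ)
    (hπb : ∀ s a, 0 < πb s a)
    (hPsum : ∀ s a, ∑ s', P s a s' = 1)
    (hπsum : ∀ s, ∑ a, π s a = 1)
    (hπbsum : ∀ s, ∑ a, πb s a = 1)
    (t : Fin (T + 1)) (f : S → ℝ) :
    ∑ τ : Fin (T + 1) → S × A,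
        (P₀ (τ 0).1 * (∏ u : Fin (T + 1), πb (τ u).1 (τ u).2) *
            ∏ u : Fin T, P (τ u.castSucc).1 (τ u.castSucc).2 (τ u.succ).1) *
          (∏ u ∈ Finset.Iic t, π (τ u).1 (τ u).2 / πb (τ u).1 (τ u).2) *
          f (τ t).1 =
      ∑ τ : Fin (T + 1) → S × A,
        (P₀ (τ 0).1 * (∏ u : Fin (T + 1), π (τ u).1 (τ u).2) *
            ∏ u : Fin T, P (τ u.castSucc).1 (τ u.castSucc).2 (τ u.succ).1) *
          f (τ t).1 := by
  let mixed : Fin (T + 1) → S → A → ℝ := fun u s a ↦ if u ∈ Iic t then π s a else πb s a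
  have hreweight : ∀ τ : Fin (T + 1) → S × A,
      (P₀ (τ 0).1 * (∏ u, πb (τ u).1 (τ u).2) *
          ∏ u : Fin T, P (τ u.castSucc).1 (τ u.castSucc).2 (τ u.succ).1) *
        ∏ u ∈ Iic t, π (τ u).1 (τ u).2 / πb (τ u).1 (τ u).2 = trajWeight P₀ P mixed τ := by
    intro τ
    rw [trajWeight, mul_right_comm, mul_assoc (P₀ _),
      prod_mul_prod_div_eq_prod_ite _ fun u _ ↦ (hπb _ _).ne']
  simp only [hreweight]
  refine sum_trajWeight_mul_eq_of_eqOn_Iic P₀ P hPsum ?_ (fun _ ↦ hπsum) t ?_ (fun x ↦ f x.1)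
  · intro u s
    dsimp only [mixed]
    split_ifs
    exacts [hπsum s, hπbsum s]
  · intro u hu
    simp only [mixed, mem_Iic.2 hu, if_true]

/-- Unbiasedness of the per-decision importance sampling (PDIS) estimator:
reweighting trajectories drawn from the behaviour policy `π_b` by the
per-decision importance weight `ρ_t = ∏_{u ≤ t} π(a_u|s_u)/π_b(a_u|s_u)`
yields, for any function `f` of the state at time `t`, the same expectation
as sampling trajectories from the target policy `π`. -/
theorem pdis_unbiased
    (S A : Type) [Fintype S] [Fintype A] [Nonempty S] [Nonempty A]
    (T : ℕ)
    (P₀ : S → ℝ) (P : S → A → S → ℝ) (π πb : S → A → ℝ)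
    (hP₀ : ∀ s, 0 ≤ P₀ s) (hP : ∀ s a s', 0 ≤ P s a s')
    (hπ : ∀ s a, 0 ≤ π s a) (hπb : ∀ s a, 0 < πb s a)
    (hP₀sum : ∑ s, P₀ s = 1)
    (hPsum : ∀ s a, ∑ s', P s a s' = 1)
    (hπsum : ∀ s, ∑ a, π s a = 1)
    (hπbsum : ∀ s, ∑ a, πb s a = 1)
    (t : Fin (T + 1)) (f : S → ℝ) :
    ∑ τ : Fin (T + 1) → S × A,
        (P₀ (τ 0).1 * (∏ u : Fin (T + 1), πb (τ u).1 (τ u).2) *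
            ∏ u : Fin T, P (τ u.castSucc).1 (τ u.castSucc).2 (τ u.succ).1) *
          (∏ u ∈ Finset.Iic t, π (τ u).1 (τ u).2 / πb (τ u).1 (τ u).2) *
          f (τ t).1 =
      ∑ τ : Fin (T + 1) → S × A,
        (P₀ (τ 0).1 * (∏ u : Fin (T + 1), π (τ u).1 (τ u).2) *
            ∏ u : Fin T, P (τ u.castSucc).1 (τ u.castSucc).2 (τ u.succ).1) *
          f (τ t).1 :=
  pdis_unbiased_general S A T P₀ P π πb hπb hPsum hπsum hπbsum t f
end
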